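/- arXiv:1802.08892 — 3 statements merged into one kernel-verified Lean document; each statement's English description precedes it below -/
import Mathlib

section
/- Let V be a vector space over a field 𝔽, n ≥ 2, f an n-linear map on V, and ℬ a basis of V. For any two equivalence classes [e_i], [e_j] ∈ ℬ/∼ with [e_i] ≠ [e_j], one has f(V, …, V_{[e_i]} in slot k₁, …, V_{[e_j]} in slot k₂, …, V) = 0 for all k₁, k₂ ∈ {1,…,n} with k₁ ≠ k₂; that is, V_{[e_i]} and V_{[e_j]} are f-orthogonal. -/
/- Common setting: `V` is a vector space over a field `𝔽`, and `f` is an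
`n`-linear map on `V` where `n = m + 1 ≥ 2` (i.e. `1 ≤ m`).  Tuples of
length `n - 1 = m` index the last arguments of the set-valued map `F`. -/

open scoped Classical

noncomputable section

variable {𝔽 V I : Type*}

/-- The set `V* = V \ {0}` of nonzero vectors. -/
abbrev Vstar (V : Type*) [Zero V] := {v : V // v ≠ 0}

/-- The disjoint union `ℬ ∪̇ ℬ̄`, encoded by indices: `(false, i)` stands for the
basis vector `e i ∈ ℬ` and `(true, i)` for the formal bar symbol `ē i ∈ ℬ̄`. -/
abbrev BSym (I : Type*) := Bool × I

/-- The bar-swap on `ℬ ∪̇ ℬ̄`. -/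
def barSwap {I : Type*} (s : BSym I) : BSym I := (!s.1, s.2)

variable [Field 𝔽] [AddCommGroup V] [Module 𝔽 V] {m : ℕ}

/-- A basis vector, as an element of `V*`. -/
def bstar (b : Module.Basis I 𝔽 V) (i : I) : Vstar V := ⟨b i, b.ne_zero i⟩

/-- The set-valued map `F : 𝒫(V*) × (ℬ ∪̇ ℬ̄)^{n-1} → 𝒫(V*)` associated to the
`n`-linear map `f` and the basis `b` (here `n = m + 1`). -/
def Fmap (b : Module.Basis I 𝔽 V) (f : MultilinearMap 𝔽 (fun _ : Fin (m + 1) => V) V)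
    (U : Set (Vstar V)) (ξ : Fin m → BSym I) : Set (Vstar V) :=
  if ∀ t, (ξ t).1 = false then
    {w | ∃ (k : Fin (m + 1)) (σ : Equiv.Perm (Fin m)), ∃ u ∈ U,
      f (Fin.insertNth k u.1 fun t => b (ξ (σ t)).2) = w.1}
  else if ∀ t, (ξ t).1 = true then
    {w | ∃ (k : Fin (m + 1)) (σ : Equiv.Perm (Fin m)), ∃ u ∈ U,
      f (Fin.insertNth k w.1 fun t => b (ξ (σ t)).2) = u.1}
  else ∅

/-- Iterated application of `F` along a list of `(n-1)`-tuples. -/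
def iterF (b : Module.Basis I 𝔽 V) (f : MultilinearMap 𝔽 (fun _ : Fin (m + 1) => V) V) :
    Set (Vstar V) → List (Fin m → BSym I) → Set (Vstar V)
  | U, [] => U
  | U, X :: Xs => iterF b f (Fmap b f U X) Xs

/-- `X` is a connection from `e i` to `e j`.  (Since `F(∅,⋯) = ∅`, the requirement
that all intermediate iterated images are nonempty is equivalent to the final
image containing `e j`.) -/
def IsConnection (b : Module.Basis I 𝔽 V) (f : MultilinearMap 𝔽 (fun _ : Fin (m + 1) => V) V)
    (i j : I) (X : List (Fin m → BSym I)) : Prop :=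
  X ≠ [] ∧ bstar b j ∈ iterF b f {bstar b i} X

/-- `e i` is connected to `e j`. -/
def Connected (b : Module.Basis I 𝔽 V) (f : MultilinearMap 𝔽 (fun _ : Fin (m + 1) => V) V)
    (i j : I) : Prop :=
  i = j ∨ ∃ X : List (Fin m → BSym I), IsConnection b f i j X

/-- Two subspaces `W₁, W₂` are `f`-orthogonal. -/
def FOrthogonal (f : MultilinearMap 𝔽 (fun _ : Fin (m + 1) => V) V)
    (W₁ W₂ : Submodule 𝔽 V) : Prop :=
  ∀ k₁ k₂ : Fin (m + 1), k₁ ≠ k₂ →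
    ∀ v : Fin (m + 1) → V, v k₁ ∈ W₁ → v k₂ ∈ W₂ → f v = 0

/-- A subspace `W` is strongly `f`-invariant: `f(V,…,W,…,V) ⊆ W` for every slot. -/
def StronglyInvariant (f : MultilinearMap 𝔽 (fun _ : Fin (m + 1) => V) V)
    (W : Submodule 𝔽 V) : Prop :=
  ∀ (k : Fin (m + 1)) (v : Fin (m + 1) → V), v k ∈ W → f v ∈ W

/-- `V_{[e i]}`, the span of the connection class of `e i`. -/
def classSpan (b : Module.Basis I 𝔽 V) (f : MultilinearMap 𝔽 (fun _ : Fin (m + 1) => V) V)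
    (i : I) : Submodule 𝔽 V :=
  Submodule.span 𝔽 (⇑b '' {j | Connected b f i j})

/-- The projection `Π_{V_{[e c]}} : V → V_{[e c]}` relative to the decomposition
`V = ⊕ V_{[e i]}` (expressed through basis coordinates). -/
def projClass (b : Module.Basis I 𝔽 V) (f : MultilinearMap 𝔽 (fun _ : Fin (m + 1) => V) V)
    (c : I) : V →ₗ[𝔽] V :=
  b.constr 𝔽 fun j => if Connected b f c j then b j else 0

/-- One step of the relation `≈`: the sum over `k₁ < k₂` of
`Π_{V_{[c]}}(f(V,…,V_{[d]},…,V_{[d]},…,V)) + Π_{V_{[d]}}(f(V,…,V_{[c]},…,V_{[c]},…,V))`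
is nonzero. -/
def ApproxStep (b : Module.Basis I 𝔽 V) (f : MultilinearMap 𝔽 (fun _ : Fin (m + 1) => V) V)
    (c d : I) : Prop :=
  ∃ k₁ k₂ : Fin (m + 1), k₁ < k₂ ∧
    ((∃ v : Fin (m + 1) → V, v k₁ ∈ classSpan b f d ∧ v k₂ ∈ classSpan b f d ∧
        projClass b f c (f v) ≠ 0) ∨
     (∃ v : Fin (m + 1) → V, v k₁ ∈ classSpan b f c ∧ v k₂ ∈ classSpan b f c ∧
        projClass b f d (f v) ≠ 0))

/-- `V_{[e i]} ≈ V_{[e j]}`: either they coincide (same connection class) or they are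
linked by a finite chain of classes with nonvanishing projection sums. -/
def Approx (b : Module.Basis I 𝔽 V) (f : MultilinearMap 𝔽 (fun _ : Fin (m + 1) => V) V)
    (i j : I) : Prop :=
  Relation.ReflTransGen (fun c d => Connected b f c d ∨ ApproxStep b f c d) i j

/-- `⌢V_{[e i]} = ⊕_{V_{[e j]} ∈ [V_{[e i]}]} V_{[e j]}`. -/
def hatSpan (b : Module.Basis I 𝔽 V) (f : MultilinearMap 𝔽 (fun _ : Fin (m + 1) => V) V)
    (i : I) : Submodule 𝔽 V :=
  Submodule.span 𝔽 (⇑b '' {j | Approx b f i j})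

/-- Two decompositions of `V` as `f`-orthogonal direct sums of strongly `f`-invariant
subspaces (given as the sets of their summands) are isomorphic: there is a linear
automorphism `h` of `V` commuting with `f` carrying the summands of the first
bijectively onto the summands of the second. -/
def IsoDecomp (f : MultilinearMap 𝔽 (fun _ : Fin (m + 1) => V) V)
    (S T : Set (Submodule 𝔽 V)) : Prop :=
  ∃ h : V ≃ₗ[𝔽] V,
    (∀ v : Fin (m + 1) → V, f (fun k => h (v k)) = h (f v)) ∧
    (Submodule.map (h : V →ₗ[𝔽] V)) '' S = T

/-- `X` is a strongly `f'`-invariant subspace of `W`, where `f'` is the restriction of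
`f` to `W`: `f(W,…,X,…,W) ⊆ X` for every slot. -/
def SInvIn (f : MultilinearMap 𝔽 (fun _ : Fin (m + 1) => V) V)
    (W X : Submodule 𝔽 V) : Prop :=
  ∀ (k : Fin (m + 1)) (v : Fin (m + 1) → V), (∀ t, v t ∈ W) → v k ∈ X → f v ∈ X

/-- `W` is `f'`-simple, `f'` being the restriction of `f` to `W`: the restricted map is
nonzero and the only strongly `f'`-invariant subspaces of `W` are `0` and `W`. -/
def SimpleIn (f : MultilinearMap 𝔽 (fun _ : Fin (m + 1) => V) V)
    (W : Submodule 𝔽 V) : Prop :=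
  (∃ v : Fin (m + 1) → V, (∀ t, v t ∈ W) ∧ f v ≠ 0) ∧
  ∀ X : Submodule 𝔽 V, X ≤ W → SInvIn f W X → X = ⊥ ∨ X = W

/-- The annihilator of the restriction `f'` of `f` to `W`. -/
def annIn (f : MultilinearMap 𝔽 (fun _ : Fin (m + 1) => V) V)
    (W : Submodule 𝔽 V) : Set V :=
  {w | w ∈ W ∧ ∀ (k : Fin (m + 1)) (v : Fin (m + 1) → V),
    (∀ t, v t ∈ W) → v k = w → f v = 0}

/-- `𝓘(w)`: the smallest strongly `f'`-invariant subspace of `W` containing `w`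
(equivalently, the ideal of `(W, f')` generated by `w`). -/
def idealGenIn (f : MultilinearMap 𝔽 (fun _ : Fin (m + 1) => V) V)
    (W : Submodule 𝔽 V) (w : V) : Submodule 𝔽 V :=
  sInf {X : Submodule 𝔽 V | X ≤ W ∧ SInvIn f W X ∧ w ∈ X}

/-- `S` is an `i`-division basis of `W` with respect to the restriction `f'` of `f`:
whenever `c ∈ S`, `b₁, …, b_{n-1} ∈ W` and `f'(b₁,…,c,…,b_{n-1}) = w ≠ 0` with `c` in
some slot `k`, then `c, b₁, …, b_{n-1} ∈ 𝓘(w)`. -/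
def IDivisionBasisIn (f : MultilinearMap 𝔽 (fun _ : Fin (m + 1) => V) V)
    (W : Submodule 𝔽 V) (S : Set V) : Prop :=
  ∀ c ∈ S, ∀ (k : Fin (m + 1)) (v : Fin (m + 1) → V),
    (∀ t, v t ∈ W) → v k = c → f v ≠ 0 → ∀ t, v t ∈ idealGenIn f W (f v)


/- A nonzero value `f(e_{r 1}, …, e_{r n})` on basis vectors connects any two of its
arguments: an unbarred step from `e_{r k₁}` reaches `w = f(e_{r 1}, …, e_{r n})`, and a
barred step from `w` reaches `e_{r k₂}`. Connectedness is an equivalence relation (a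
connection is reversed by swapping bars and reversing the list), so if `[e_i] ≠ [e_j]`
then every term of the basis expansion of `f(…, x, …, y, …)` with `x ∈ V_{[e_i]}` and
`y ∈ V_{[e_j]}` vanishes. -/

section Connection

variable (b : Module.Basis I 𝔽 V) (f : MultilinearMap 𝔽 (fun _ : Fin (m + 1) => V) V)

lemma Fmap_mono {U U' : Set (Vstar V)} (h : U ⊆ U') (ξ : Fin m → BSym I) :
    Fmap b f U ξ ⊆ Fmap b f U' ξ := by
  unfold Fmap
  split_ifs
  · rintro w ⟨k, σ, u, hu, he⟩; exact ⟨k, σ, u, h hu, he⟩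
  · rintro w ⟨k, σ, u, hu, he⟩; exact ⟨k, σ, u, h hu, he⟩
  · exact Set.Subset.rfl

lemma iterF_mono (X : List (Fin m → BSym I)) {U U' : Set (Vstar V)} (h : U ⊆ U') :
    iterF b f U X ⊆ iterF b f U' X := by
  induction X generalizing U U' with
  | nil => exact h
  | cons ξ Xs ih => exact ih (Fmap_mono b f h ξ)

lemma iterF_append (X Y : List (Fin m → BSym I)) (U : Set (Vstar V)) :
    iterF b f U (X ++ Y) = iterF b f (iterF b f U X) Y := by
  induction X generalizing U with
  | nil => rfl
  | cons ξ Xs ih => exact ih _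

lemma exists_mem_Fmap_barSwap (hm : 1 ≤ m) {U : Set (Vstar V)} {ξ : Fin m → BSym I}
    {w : Vstar V} (hw : w ∈ Fmap b f U ξ) :
    ∃ u ∈ U, u ∈ Fmap b f {w} (barSwap ∘ ξ) := by
  have t₀ : Fin m := ⟨0, hm⟩
  unfold Fmap at hw ⊢
  split_ifs at hw with hfalse htrue
  · obtain ⟨k, σ, u, hu, he⟩ := hw
    refine ⟨u, hu, ?_⟩
    rw [if_neg (fun hall => by simpa [barSwap, hfalse t₀] using hall t₀),
      if_pos (fun t => by simp [barSwap, hfalse t])]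
    exact ⟨k, σ, w, rfl, by simpa [barSwap] using he⟩
  · obtain ⟨k, σ, u, hu, he⟩ := hw
    refine ⟨u, hu, ?_⟩
    rw [if_pos (fun t => by simp [barSwap, htrue t])]
    exact ⟨k, σ, w, rfl, by simpa [barSwap] using he⟩
  · exact absurd hw (Set.notMem_empty w)

lemma exists_mem_iterF_reverse (hm : 1 ≤ m) (X : List (Fin m → BSym I))
    {U : Set (Vstar V)} {w : Vstar V} (hw : w ∈ iterF b f U X) :
    ∃ u ∈ U, u ∈ iterF b f {w} (X.map (barSwap ∘ ·)).reverse := by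
  induction X generalizing U with
  | nil => exact ⟨w, hw, rfl⟩
  | cons ξ Xs ih =>
    obtain ⟨u', hu', hw'⟩ := ih hw
    obtain ⟨u, hu, hstep⟩ := exists_mem_Fmap_barSwap b f hm hu'
    refine ⟨u, hu, ?_⟩
    rw [List.map_cons, List.reverse_cons, iterF_append]
    exact Fmap_mono b f (Set.singleton_subset_iff.2 hw') _ hstep

variable {b f}

lemma Connected.symm (hm : 1 ≤ m) {i j : I} (h : Connected b f i j) : Connected b f j i := by
  rcases h with rfl | ⟨X, hX, hij⟩
  · exact Or.inl rfl
  · obtain ⟨u, rfl, hji⟩ := exists_mem_iterF_reverse b f hm X hij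
    exact Or.inr ⟨_, by simpa using hX, hji⟩

lemma Connected.trans {i j k : I} (hij : Connected b f i j) (hjk : Connected b f j k) :
    Connected b f i k := by
  rcases hij with rfl | ⟨X, hX, hij⟩
  · exact hjk
  rcases hjk with rfl | ⟨Y, -, hjk⟩
  · exact Or.inr ⟨X, hX, hij⟩
  refine Or.inr ⟨X ++ Y, by simp [hX], ?_⟩
  rw [iterF_append]
  exact iterF_mono b f Y (Set.singleton_subset_iff.2 hij) hjk

lemma connected_of_map_basis_ne_zero (hm : 1 ≤ m) (k₁ k₂ : Fin (m + 1)) (r : Fin (m + 1) → I)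
    (hr : f (fun t => b (r t)) ≠ 0) : Connected b f (r k₁) (r k₂) := by
  let w : Vstar V := ⟨f (fun t => b (r t)), hr⟩
  let ξ₁ : Fin m → BSym I := fun t => (false, r (k₁.succAbove t))
  let ξ₂ : Fin m → BSym I := fun t => (true, r (k₂.succAbove t))
  have hinsert (k : Fin (m + 1)) :
      f (Fin.insertNth k (b (r k)) fun t => b (r (k.succAbove t))) = w.1 :=
    congrArg f (Fin.insertNth_self_removeNth k fun t => b (r t))
  have hw : w ∈ Fmap b f {bstar b (r k₁)} ξ₁ := by
    unfold Fmap
    rw [if_pos fun _ => rfl]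
    exact ⟨k₁, 1, bstar b (r k₁), rfl, hinsert k₁⟩
  have hr₂ : bstar b (r k₂) ∈ Fmap b f {w} ξ₂ := by
    unfold Fmap
    rw [if_neg fun hall => by simpa [ξ₂] using hall ⟨0, hm⟩, if_pos fun _ => rfl]
    exact ⟨k₂, 1, w, rfl, hinsert k₂⟩
  exact Or.inr ⟨[ξ₁, ξ₂], by simp, Fmap_mono b f (Set.singleton_subset_iff.2 hw) ξ₂ hr₂⟩

end Connection

lemma MultilinearMap.map_eq_zero_of_mem_span_basis {ι W : Type*} [Fintype ι]
    [AddCommGroup W] [Module 𝔽 W] (b : Module.Basis I 𝔽 V)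
    (f : MultilinearMap 𝔽 (fun _ : ι => V) W) {k₁ k₂ : ι} {S₁ S₂ : Set I} {v : ι → V}
    (hv₁ : v k₁ ∈ Submodule.span 𝔽 (b '' S₁)) (hv₂ : v k₂ ∈ Submodule.span 𝔽 (b '' S₂))
    (hf : ∀ r : ι → I, r k₁ ∈ S₁ → r k₂ ∈ S₂ → f (fun t => b (r t)) = 0) : f v = 0 := by
  have hexpand : v = fun t => ∑ s ∈ (b.repr (v t)).support, b.repr (v t) s • b s := by
    funext t
    conv_lhs => rw [← b.linearCombination_repr (v t)]
    rfl
  rw [hexpand, MultilinearMap.map_sum_finset]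
  refine Finset.sum_eq_zero fun r hr => ?_
  have hsupp := Fintype.mem_piFinset.1 hr
  rw [MultilinearMap.map_smul_univ,
    hf r ((b.mem_span_image.1 hv₁) (hsupp k₁)) ((b.mem_span_image.1 hv₂) (hsupp k₂)), smul_zero]

/-- distinct classes give `f`-orthogonal spans. -/
theorem stmt5 (hm : 1 ≤ m) (b : Module.Basis I 𝔽 V)
    (f : MultilinearMap 𝔽 (fun _ : Fin (m + 1) => V) V)
    (i j : I) (h : ¬ Connected b f i j) :
    FOrthogonal f (classSpan b f i) (classSpan b f j) := by
  intro k₁ k₂ _ v hv₁ hv₂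
  refine f.map_eq_zero_of_mem_span_basis b hv₁ hv₂ fun r hi hj => ?_
  by_contra hr
  exact h (hi.trans ((connected_of_map_basis_ne_zero hm k₁ k₂ r hr).trans (hj.symm hm)))
end
end

section
/- Let V be a vector space over a field 𝔽, n ≥ 2, f an n-linear map on V, ℬ a basis of V, and g : V → V a linear isomorphism satisfying f(g(ξ₁),…,g(ξ_n)) = g(f(ξ₁,…,ξ_n)) for all ξ₁,…,ξ_n ∈ ℬ. Then for every U ∈ 𝒫(V*) and all ξ₁,…,ξ_{n-1} ∈ ℬ one has g(F(U, ξ̄₁,…,ξ̄_{n-1})) = F′(g(U), bar of g(ξ₁),…, bar of g(ξ_{n-1})), where F′ is the map defined in the same way from f and the basis ℬ′ = {g(e_i) : e_i ∈ ℬ}, the symbol bar of g(ξ) is the formal bar symbol over ℬ′ corresponding to g(ξ), and g(U) is the image set of U under g. -/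
/- Common setting: `V` is a vector space over a field `𝔽`, and `f` is an
`n`-linear map on `V` where `n = m + 1 ≥ 2` (i.e. `1 ≤ m`).  Tuples of
length `n - 1 = m` index the last arguments of the set-valued map `F`. -/

open scoped Classical

noncomputable section

variable {𝔽 V I : Type*}

variable [Field 𝔽] [AddCommGroup V] [Module 𝔽 V] {m : ℕ}

/-! By multilinearity, a linear isomorphism `g` that intertwines `f` on tuples of basis vectors
intertwines it on all tuples. Each defining relation `f(ξ_σ(1), …, u, …, ξ_σ(n-1)) = w` of `F`
(barred or not) is then carried by `g` to the relation `f(g ξ_σ(1), …, g u, …, g ξ_σ(n-1)) = g w`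
of `F'`, so `g` maps `F(U, ·)` onto `F'(g U, g ·)`. -/

lemma Fin.comp_insertNth {α β : Type*} {m : ℕ} (φ : α → β) (k : Fin (m + 1)) (x : α)
    (p : Fin m → α) :
    (fun j => φ (Fin.insertNth (α := fun _ => α) k x p j)) =
      Fin.insertNth k (φ x) fun t => φ (p t) := by
  funext j
  refine Fin.succAboveCases k ?_ ?_ j <;> simp

theorem MultilinearMap.map_comp_eq_of_basis {R ι ιM M M' N N' : Type*} [CommSemiring R]
    [Finite ι] [AddCommMonoid M] [Module R M] [AddCommMonoid M'] [Module R M']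
    [AddCommMonoid N] [Module R N] [AddCommMonoid N'] [Module R N']
    (b : Module.Basis ιM R M) (f : MultilinearMap R (fun _ : ι => M) N)
    (f' : MultilinearMap R (fun _ : ι => M') N') (g : M →ₗ[R] M') (h : N →ₗ[R] N')
    (hfg : ∀ ξ : ι → ιM, f' (fun k => g (b (ξ k))) = h (f fun k => b (ξ k))) (v : ι → M) :
    f' (fun k => g (v k)) = h (f v) := by
  have : f'.compLinearMap (fun _ => g) = h.compMultilinearMap f :=
    Module.Basis.ext_multilinear (fun _ => b) hfg
  exact DFunLike.congr_fun this v

section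

variable {W : Type*} [AddCommGroup W] [Module 𝔽 W]

def Vstar.congr (g : V ≃ₗ[𝔽] W) : Vstar V ≃ Vstar W :=
  g.toEquiv.subtypeEquiv fun _ => g.map_ne_zero_iff.symm

@[simp]
theorem Vstar.coe_congr_apply (g : V ≃ₗ[𝔽] W) (u : Vstar V) : (Vstar.congr g u : W) = g u :=
  rfl

theorem image_Fmap_of_linearEquiv (b : Module.Basis I 𝔽 V)
    (f : MultilinearMap 𝔽 (fun _ : Fin (m + 1) => V) V)
    (f' : MultilinearMap 𝔽 (fun _ : Fin (m + 1) => W) W) (g : V ≃ₗ[𝔽] W)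
    (hfg : ∀ v : Fin (m + 1) → V, f' (fun k => g (v k)) = g (f v))
    (U : Set (Vstar V)) (ξ : Fin m → BSym I) :
    Vstar.congr g '' Fmap b f U ξ = Fmap (b.map g) f' (Vstar.congr g '' U) ξ := by
  have hins (k : Fin (m + 1)) (x : V) (p : Fin m → V) :
      f' (Fin.insertNth k (g x) fun t => g (p t)) = g (f (Fin.insertNth k x p)) := by
    rw [← hfg, Fin.comp_insertNth]
  ext w
  obtain ⟨w, rfl⟩ := (Vstar.congr g).surjective w
  rw [(Vstar.congr g).injective.mem_set_image]
  unfold Fmap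
  split_ifs
  all_goals simp only [Set.mem_ofPred_eq, Set.exists_mem_image, Set.mem_empty_iff_false,
    Vstar.coe_congr_apply, Module.Basis.map_apply, hins, g.injective.eq_iff]

end

/-- Lemma, barred case. -/
theorem stmt11 (b : Module.Basis I 𝔽 V)
    (f : MultilinearMap 𝔽 (fun _ : Fin (m + 1) => V) V) (g : V ≃ₗ[𝔽] V)
    (hg : ∀ ξ : Fin (m + 1) → I,
      f (fun k => g (b (ξ k))) = g (f (fun k => b (ξ k))))
    (U : Set (Vstar V)) (ξ : Fin m → I) :
    (fun u : Vstar V => (⟨g u.1, fun h0 => u.2 (g.injective (by rw [h0, map_zero]))⟩ : Vstar V)) ''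
        Fmap b f U (fun t => (true, ξ t)) =
      Fmap (b.map g) f
        ((fun u : Vstar V => (⟨g u.1, fun h0 => u.2 (g.injective (by rw [h0, map_zero]))⟩ : Vstar V)) '' U)
        (fun t => (true, ξ t)) :=
  image_Fmap_of_linearEquiv b f f g
    (MultilinearMap.map_comp_eq_of_basis b f f (g : V →ₗ[𝔽] V) g hg) U _
end
end

section
/- Let V be a vector space over a field 𝔽, n ≥ 2, f an n-linear map on V, and ℬ = {e_i : i ∈ I} a basis of V. Suppose g : V → V is a linear isomorphism satisfying f(g(ξ₁),…,g(ξ_n)) = g(f(ξ₁,…,ξ_n)) for all ξ₁,…,ξ_n ∈ ℬ. Then the decompositions Γ : V = ⊕_{[V_{[e_i]}] ∈ ℱ/≈} ⌢V_{[e_i]} and Γ′ : V = ⊕_{[V_{[g(e_i)]}] ∈ ℱ′/≈} ⌢V_{[g(e_i)]}, obtained by applying the decomposition theorem to the bases ℬ and ℬ′ = {g(e_i) : i ∈ I} respectively, are isomorphic. -/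
/- Common setting: `V` is a vector space over a field `𝔽`, and `f` is an
`n`-linear map on `V` where `n = m + 1 ≥ 2` (i.e. `1 ≤ m`).  Tuples of
length `n - 1 = m` index the last arguments of the set-valued map `F`. -/

open scoped Classical

noncomputable section

variable {𝔽 V I : Type*}

variable [Field 𝔽] [AddCommGroup V] [Module 𝔽 V] {m : ℕ}

/-!
Everything in the decomposition theorem (the map `F`, connections, the spans `V_{[c]}`, the
projections, `≈` and the spans `⌢V_{[c]}`) is built from `f` and the basis alone. By
multilinearity `g` commutes with `f` everywhere, so `g` carries each of these objects for `ℬ`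
to the corresponding one for `g(ℬ)`: the relations `∼` and `≈` on the common index set agree,
and `g(⌢V_{[e i]}) = ⌢V_{[g(e i)]}`. Hence `g` itself is the isomorphism of decompositions.
-/

theorem MultilinearMap.map_comp_of_basis {R M ι κ : Type*} [CommSemiring R] [AddCommMonoid M]
    [Module R M] [Finite ι] (b : Module.Basis κ R M) (f : MultilinearMap R (fun _ : ι => M) M)
    (g : M →ₗ[R] M) (h : ∀ ξ : ι → κ, f (fun k => g (b (ξ k))) = g (f fun k => b (ξ k)))
    (v : ι → M) : f (fun k => g (v k)) = g (f v) := by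
  have : f.compLinearMap (fun _ => g) = g.compMultilinearMap f :=
    Module.Basis.ext_multilinear (fun _ => b) h
  exact DFunLike.congr_fun this v

theorem Fin.comp_insertNth_s12 {α β : Type*} {n : ℕ} (g : α → β) (k : Fin (n + 1)) (x : α)
    (p : Fin n → α) : g ∘ Fin.insertNth k x p = Fin.insertNth k (g x) (g ∘ p) := by
  ext j
  refine Fin.succAboveCases k ?_ (fun _ => ?_) j <;> simp

def vstarEquiv (g : V ≃ₗ[𝔽] V) : Vstar V ≃ Vstar V :=
  g.toEquiv.subtypeEquiv fun _ => (g.map_ne_zero_iff).symm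

theorem vstarEquiv_apply_coe (g : V ≃ₗ[𝔽] V) (u : Vstar V) : (vstarEquiv g u).1 = g u.1 := rfl

theorem bstar_map (b : Module.Basis I 𝔽 V) (g : V ≃ₗ[𝔽] V) (i : I) :
    bstar (b.map g) i = vstarEquiv g (bstar b i) :=
  Subtype.ext (b.map_apply g i)

section Transport

variable {f : MultilinearMap 𝔽 (fun _ : Fin (m + 1) => V) V} {g : V ≃ₗ[𝔽] V}

theorem map_insertNth_basis_map (hc : ∀ v : Fin (m + 1) → V, f (fun k => g (v k)) = g (f v))
    (b : Module.Basis I 𝔽 V) (k : Fin (m + 1)) (x : V) (p : Fin m → I) :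
    f (Fin.insertNth k (g x) fun t => b.map g (p t)) =
      g (f (Fin.insertNth k x fun t => b (p t))) := by
  rw [← hc]
  exact congrArg f (Fin.comp_insertNth_s12 g k x _).symm

theorem Fmap_basis_map (hc : ∀ v : Fin (m + 1) → V, f (fun k => g (v k)) = g (f v))
    (b : Module.Basis I 𝔽 V) (U : Set (Vstar V)) (ξ : Fin m → BSym I) :
    Fmap (b.map g) f (vstarEquiv g '' U) ξ = vstarEquiv g '' Fmap b f U ξ := by
  ext w
  obtain ⟨w, rfl⟩ := (vstarEquiv g).surjective w
  rw [(vstarEquiv g).injective.mem_set_image]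
  unfold Fmap
  split_ifs <;>
    simp only [Set.mem_ofPred_eq, Set.exists_mem_image, vstarEquiv_apply_coe,
      map_insertNth_basis_map hc, g.injective.eq_iff, Set.mem_empty_iff_false]

theorem iterF_basis_map (hc : ∀ v : Fin (m + 1) → V, f (fun k => g (v k)) = g (f v))
    (b : Module.Basis I 𝔽 V) (U : Set (Vstar V)) (X : List (Fin m → BSym I)) :
    iterF (b.map g) f (vstarEquiv g '' U) X = vstarEquiv g '' iterF b f U X := by
  induction X generalizing U with
  | nil => rfl
  | cons ξ Xs ih => rw [iterF, iterF, Fmap_basis_map hc, ih]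

theorem connected_basis_map (hc : ∀ v : Fin (m + 1) → V, f (fun k => g (v k)) = g (f v))
    (b : Module.Basis I 𝔽 V) (i j : I) :
    Connected (b.map g) f i j ↔ Connected b f i j := by
  simp only [Connected, IsConnection, bstar_map, ← Set.image_singleton, iterF_basis_map hc,
    (vstarEquiv g).injective.mem_set_image]

theorem classSpan_basis_map (hc : ∀ v : Fin (m + 1) → V, f (fun k => g (v k)) = g (f v))
    (b : Module.Basis I 𝔽 V) (i : I) :
    classSpan (b.map g) f i = (classSpan b f i).map (g : V →ₗ[𝔽] V) := by
  simp only [classSpan, Submodule.map_span, connected_basis_map hc, ← Set.image_comp]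
  rfl

theorem projClass_basis_map (hc : ∀ v : Fin (m + 1) → V, f (fun k => g (v k)) = g (f v))
    (b : Module.Basis I 𝔽 V) (c : I) (x : V) :
    projClass (b.map g) f c (g x) = g (projClass b f c x) := by
  suffices (projClass (b.map g) f c).comp (g : V →ₗ[𝔽] V) = (g : V →ₗ[𝔽] V).comp (projClass b f c)
    from DFunLike.congr_fun this x
  refine b.ext fun j => ?_
  simp only [LinearMap.comp_apply, LinearEquiv.coe_coe, projClass, ← b.map_apply g,
    Module.Basis.constr_basis, connected_basis_map hc]
  split_ifs <;> simp

theorem exists_projClass_ne_zero_basis_map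
    (hc : ∀ v : Fin (m + 1) → V, f (fun k => g (v k)) = g (f v))
    (b : Module.Basis I 𝔽 V) (c d : I) (k₁ k₂ : Fin (m + 1)) :
    (∃ v : Fin (m + 1) → V, v k₁ ∈ classSpan (b.map g) f d ∧ v k₂ ∈ classSpan (b.map g) f d ∧
        projClass (b.map g) f c (f v) ≠ 0) ↔
      ∃ v : Fin (m + 1) → V, v k₁ ∈ classSpan b f d ∧ v k₂ ∈ classSpan b f d ∧
        projClass b f c (f v) ≠ 0 := by
  rw [g.surjective.comp_left.exists]
  simp [Function.comp_def, classSpan_basis_map hc, Submodule.mem_map_equiv, hc,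
    projClass_basis_map hc]

theorem approxStep_basis_map (hc : ∀ v : Fin (m + 1) → V, f (fun k => g (v k)) = g (f v))
    (b : Module.Basis I 𝔽 V) (c d : I) :
    ApproxStep (b.map g) f c d ↔ ApproxStep b f c d := by
  simp only [ApproxStep, exists_projClass_ne_zero_basis_map hc]

theorem hatSpan_basis_map (hc : ∀ v : Fin (m + 1) → V, f (fun k => g (v k)) = g (f v))
    (b : Module.Basis I 𝔽 V) (i : I) :
    hatSpan (b.map g) f i = (hatSpan b f i).map (g : V →ₗ[𝔽] V) := by
  simp only [hatSpan, Approx, Submodule.map_span, connected_basis_map hc,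
    approxStep_basis_map hc, ← Set.image_comp]
  rfl

end Transport

theorem stmt12_general (b : Module.Basis I 𝔽 V)
    (f : MultilinearMap 𝔽 (fun _ : Fin (m + 1) => V) V) (g : V ≃ₗ[𝔽] V)
    (hg : ∀ ξ : Fin (m + 1) → I,
      f (fun k => g (b (ξ k))) = g (f (fun k => b (ξ k)))) :
    IsoDecomp f {W | ∃ i, W = hatSpan b f i} {W | ∃ i, W = hatSpan (b.map g) f i} := by
  have hc := f.map_comp_of_basis b (g : V →ₗ[𝔽] V) hg
  refine ⟨g, hc, ?_⟩
  ext W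
  simp [hatSpan_basis_map hc, eq_comm]

/-- a linear automorphism commuting with `f` on a basis induces
isomorphic decompositions. -/
theorem stmt12 (hm : 1 ≤ m) (b : Module.Basis I 𝔽 V)
    (f : MultilinearMap 𝔽 (fun _ : Fin (m + 1) => V) V) (g : V ≃ₗ[𝔽] V)
    (hg : ∀ ξ : Fin (m + 1) → I,
      f (fun k => g (b (ξ k))) = g (f (fun k => b (ξ k)))) :
    IsoDecomp f {W | ∃ i, W = hatSpan b f i} {W | ∃ i, W = hatSpan (b.map g) f i} :=
  stmt12_general b f g hg
end
end
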